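/- For all complex q with |q| < 1, the sum over n ≥ 0 of q^{n(2n+1)} / (-q;q)_{2n+1} equals the sum over j ≥ 0 of q^{j(3j+1)/2} (1 - q^{2j+1}). -/

import Mathlib

/-!
Put `f(t) = ∑ (-t)^n q^(n choose 2) / (-q;q)_n` and
`g(t) = ∑ t^n q^(n(3n-1)/2) (-t;q)_n (1 - t q^(2n)) / (-q;q)_n`. Pairing the terms `2k` and `2k+1`
of `f(q)` gives the left-hand side, and `g(q)` is the right-hand side.

Both series converge uniformly on the closed unit disc, take the value `1` at `t = 0`, and each
`F ∈ {f, g}` satisfies `F(t) + (1 + t) F(tq) = 2`, because termwise `F(t) + (1 + t) F(tq)` is the telescoping series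
`∑ (x_n - x_(n+1))`, where `x_n` is the `n`-th term of `F` (for `g`, without its factor
`1 - t q^(2n)`) multiplied by `1 + q^n`. So `D = f - g` satisfies `D(t) = ±(-t;q)_K D(t q^K)` for
every `K`; the products `(-t;q)_K` stay bounded, while `D(t q^K) → D(0) = 0` by continuity.
-/

noncomputable def qPoch (a q : ℂ) (n : ℕ) : ℂ := ∏ i ∈ Finset.range n, (1 - a * q ^ i)

noncomputable def qPochInf (a q : ℂ) : ℂ := ∏' i : ℕ, (1 - a * q ^ i)

open Filter Topology Metric Set

lemma Nat.choose_two_succ (n : ℕ) : (n + 1).choose 2 = n.choose 2 + n := by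
  rw [Nat.choose_succ_succ, Nat.choose_one_right, add_comm]

lemma Nat.choose_two_two_mul_add (k : ℕ) : (2 * k).choose 2 + 2 * k = k * (2 * k + 1) := by
  qify [Nat.cast_choose_two]
  ring

lemma Nat.three_mul_choose_two_add (j : ℕ) : 3 * j.choose 2 + 2 * j = j * (3 * j + 1) / 2 := by
  refine (Nat.div_eq_of_eq_mul_left two_pos ?_).symm
  qify [Nat.cast_choose_two]
  ring

lemma norm_mul_le_one {t q : ℂ} (ht : ‖t‖ ≤ 1) (hq : ‖q‖ ≤ 1) : ‖t * q‖ ≤ 1 := by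
  rw [norm_mul]
  exact mul_le_one₀ ht (norm_nonneg q) hq

section QPochhammer

variable {a q : ℂ}

lemma qPoch_zero (a q : ℂ) : qPoch a q 0 = 1 := Finset.prod_range_zero _

lemma qPoch_succ (a q : ℂ) (n : ℕ) : qPoch a q (n + 1) = qPoch a q n * (1 - a * q ^ n) :=
  Finset.prod_range_succ _ _

lemma one_sub_mul_qPoch_mul (a q : ℂ) (n : ℕ) :
    (1 - a) * qPoch (a * q) q n = qPoch a q (n + 1) := by
  rw [qPoch, qPoch, Finset.prod_range_succ', pow_zero, mul_one, mul_comm]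
  congr 1
  exact Finset.prod_congr rfl fun i _ => by ring

@[fun_prop]
lemma continuous_qPoch (q : ℂ) (n : ℕ) : Continuous fun a => qPoch a q n := by
  unfold qPoch
  fun_prop

lemma pow_le_norm_qPoch (ha : ‖a‖ < 1) (hq : ‖q‖ ≤ 1) (n : ℕ) :
    (1 - ‖a‖) ^ n ≤ ‖qPoch a q n‖ := by
  have h1 : (1 - ‖a‖) ^ n = ∏ _i ∈ Finset.range n, (1 - ‖a‖) := by simp
  rw [h1, qPoch, norm_prod]
  refine Finset.prod_le_prod (fun _ _ => by linarith) fun i _ => ?_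
  calc 1 - ‖a‖ ≤ 1 - ‖a * q ^ i‖ := by
        rw [norm_mul, norm_pow]
        gcongr
        exact mul_le_of_le_one_right (norm_nonneg a) (pow_le_one₀ (norm_nonneg q) hq)
    _ ≤ ‖1 - a * q ^ i‖ := by simpa using norm_sub_norm_le (1 : ℂ) (a * q ^ i)

lemma qPoch_ne_zero (ha : ‖a‖ < 1) (hq : ‖q‖ ≤ 1) (n : ℕ) : qPoch a q n ≠ 0 :=
  norm_pos_iff.mp <| (pow_pos (by linarith) n).trans_le (pow_le_norm_qPoch ha hq n)

lemma norm_qPoch_le_exp (hq : ‖q‖ < 1) (n : ℕ) :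
    ‖qPoch a q n‖ ≤ Real.exp (‖a‖ / (1 - ‖q‖)) := by
  calc ‖qPoch a q n‖ ≤ ∏ i ∈ Finset.range n, (1 + ‖a‖ * ‖q‖ ^ i) := by
        rw [qPoch, norm_prod]
        refine Finset.prod_le_prod (fun _ _ => norm_nonneg _) fun i _ => ?_
        simpa [norm_pow] using norm_sub_le (1 : ℂ) (a * q ^ i)
    _ ≤ Real.exp (∑ i ∈ Finset.range n, ‖a‖ * ‖q‖ ^ i) :=
        Real.prod_one_add_le_exp_sum _ fun _ => by positivity
    _ ≤ Real.exp (‖a‖ / (1 - ‖q‖)) := by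
        rw [Real.exp_le_exp, ← Finset.mul_sum, ← mul_one_div ‖a‖]
        gcongr
        simpa using geom_sum_Ico_le_of_lt_one (m := 0) (n := n) (norm_nonneg q) hq

end QPochhammer

lemma summable_pow_mul_pow_choose_two {K x : ℝ} (hx : |x| < 1) :
    Summable fun n => K ^ n * x ^ n.choose 2 := by
  refine summable_of_ratio_norm_eventually_le one_half_lt_one ?_
  have hlim : Tendsto (fun n : ℕ => ‖K * x ^ n‖) atTop (𝓝 0) := by
    simpa using ((tendsto_pow_atTop_nhds_zero_of_abs_lt_one hx).const_mul K).norm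
  filter_upwards [hlim.eventually (eventually_le_nhds one_half_pos)] with n hn
  calc ‖K ^ (n + 1) * x ^ (n + 1).choose 2‖
        = ‖K * x ^ n‖ * ‖K ^ n * x ^ n.choose 2‖ := by
        rw [Nat.choose_two_succ, ← norm_mul]
        ring_nf
    _ ≤ 1 / 2 * ‖K ^ n * x ^ n.choose 2‖ := by gcongr

lemma tsum_add_tsum_eq_of_telescoping {G : Type*} [AddCommGroup G] [TopologicalSpace G]
    [IsTopologicalAddGroup G] [T2Space G] {a b x : ℕ → G} (ha : Summable a) (hb : Summable b)
    (hx : Tendsto x atTop (𝓝 0)) (h : ∀ n, a n + b n = x n - x (n + 1)) :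
    ∑' n, a n + ∑' n, b n = x 0 := by
  rw [← Summable.tsum_add ha hb]
  refine tendsto_nhds_unique (ha.add hb).hasSum.tendsto_sum_nat ?_
  simp only [h, Finset.sum_range_sub']
  simpa using tendsto_const_nhds.sub hx

theorem eqOn_zero_of_add_one_add_mul_comp_mul_eq_zero {q : ℂ} (hq : ‖q‖ < 1) {D : ℂ → ℂ}
    (hD : ContinuousWithinAt D (closedBall 0 1) 0) (hD0 : D 0 = 0)
    (hfun : ∀ t ∈ closedBall (0 : ℂ) 1, D t + (1 + t) * D (t * q) = 0) :
    EqOn D 0 (closedBall 0 1) := by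
  intro t ht
  have hmem : ∀ K : ℕ, t * q ^ K ∈ closedBall (0 : ℂ) 1 := fun K =>
    mem_closedBall_zero_iff.mpr <| norm_mul_le_one (mem_closedBall_zero_iff.mp ht)
      (norm_pow q K ▸ pow_le_one₀ (norm_nonneg q) hq.le)
  have hiter : ∀ K : ℕ, D t = (-1) ^ K * qPoch (-t) q K * D (t * q ^ K) := by
    intro K
    induction K with
    | zero => simp [qPoch_zero]
    | succ K ih =>
      have hstep := hfun _ (hmem K)
      rw [mul_assoc, ← pow_succ] at hstep
      rw [ih, eq_neg_of_add_eq_zero_left hstep, qPoch_succ]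
      ring
  have hsmall : Tendsto (fun K : ℕ => D (t * q ^ K)) atTop (𝓝 0) := by
    refine hD0 ▸ hD.tendsto.comp (tendsto_nhdsWithin_iff.mpr ⟨?_, .of_forall hmem⟩)
    simpa using (tendsto_pow_atTop_nhds_zero_of_norm_lt_one hq).const_mul t
  have hbound : ∀ K : ℕ, ‖(-1) ^ K * qPoch (-t) q K * D (t * q ^ K)‖
      ≤ Real.exp (‖-t‖ / (1 - ‖q‖)) * ‖D (t * q ^ K)‖ := fun K => by
    rw [norm_mul, norm_mul, norm_pow, norm_neg, norm_one, one_pow, one_mul]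
    gcongr
    exact norm_qPoch_le_exp hq K
  have hlim : Tendsto (fun K : ℕ => (-1) ^ K * qPoch (-t) q K * D (t * q ^ K)) atTop (𝓝 0) :=
    squeeze_zero_norm hbound (by simpa using hsmall.norm.const_mul _)
  exact tendsto_nhds_unique tendsto_const_nhds (funext hiter ▸ hlim)

section Series

variable {q t : ℂ}

noncomputable def lhsTerm (q t : ℂ) (n : ℕ) : ℂ := (-t) ^ n * q ^ n.choose 2 / qPoch (-q) q n

noncomputable def rhsCoeff (q t : ℂ) (n : ℕ) : ℂ :=
  t ^ n * q ^ (3 * n.choose 2 + n) * qPoch (-t) q n / qPoch (-q) q n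

noncomputable def rhsTerm (q t : ℂ) (n : ℕ) : ℂ := rhsCoeff q t n * (1 - t * q ^ (2 * n))

noncomputable def lhsSeries (q t : ℂ) : ℂ := ∑' n, lhsTerm q t n

noncomputable def rhsSeries (q t : ℂ) : ℂ := ∑' n, rhsTerm q t n

lemma qPoch_neg_self_succ (q : ℂ) (n : ℕ) :
    qPoch (-q) q (n + 1) = qPoch (-q) q n * (1 + q ^ (n + 1)) := by
  rw [qPoch_succ]
  ring

lemma qPoch_neg_self_ne_zero (hq : ‖q‖ < 1) (n : ℕ) : qPoch (-q) q n ≠ 0 :=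
  qPoch_ne_zero (by rwa [norm_neg]) hq.le n

lemma one_add_pow_succ_ne_zero (hq : ‖q‖ < 1) (n : ℕ) : 1 + q ^ (n + 1) ≠ 0 :=
  right_ne_zero_of_mul (qPoch_neg_self_succ q n ▸ qPoch_neg_self_ne_zero hq (n + 1))

lemma lhsTerm_mul_right (q t : ℂ) (n : ℕ) : lhsTerm q (t * q) n = q ^ n * lhsTerm q t n := by
  simp only [lhsTerm, ← neg_mul, mul_pow]
  ring

lemma lhsTerm_succ_mul (hq : ‖q‖ < 1) (n : ℕ) :
    lhsTerm q t (n + 1) * (1 + q ^ (n + 1)) = -t * q ^ n * lhsTerm q t n := by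
  have hP := qPoch_neg_self_ne_zero hq n
  have h1 := one_add_pow_succ_ne_zero hq n
  rw [lhsTerm, lhsTerm, qPoch_neg_self_succ, Nat.choose_two_succ]
  field_simp
  ring

lemma one_add_mul_rhsCoeff_mul_right (q t : ℂ) (n : ℕ) :
    (1 + t) * rhsCoeff q (t * q) n = q ^ n * (1 + t * q ^ n) * rhsCoeff q t n := by
  have h := one_sub_mul_qPoch_mul (-t) q n
  rw [qPoch_succ, sub_neg_eq_add, neg_mul] at h
  simp only [rhsCoeff, mul_pow, mul_div_assoc]
  rw [div_eq_mul_inv, div_eq_mul_inv]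
  linear_combination (t ^ n * q ^ n * q ^ (3 * n.choose 2 + n) * (qPoch (-q) q n)⁻¹) * h

lemma rhsCoeff_succ_mul (hq : ‖q‖ < 1) (n : ℕ) :
    rhsCoeff q t (n + 1) * (1 + q ^ (n + 1))
      = t * q ^ (3 * n + 1) * (1 + t * q ^ n) * rhsCoeff q t n := by
  have hP := qPoch_neg_self_ne_zero hq n
  have h1 := one_add_pow_succ_ne_zero hq n
  rw [rhsCoeff, rhsCoeff, qPoch_neg_self_succ, qPoch_succ, Nat.choose_two_succ]
  field_simp
  ring

lemma norm_lhsTerm_le (hq : ‖q‖ < 1) (ht : ‖t‖ ≤ 1) (n : ℕ) :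
    ‖lhsTerm q t n‖ ≤ (1 - ‖q‖)⁻¹ ^ n * ‖q‖ ^ n.choose 2 := by
  have hpos : 0 < 1 - ‖q‖ := by linarith
  calc ‖lhsTerm q t n‖ = ‖t‖ ^ n * ‖q‖ ^ n.choose 2 / ‖qPoch (-q) q n‖ := by
        simp [lhsTerm, norm_pow]
    _ ≤ 1 * ‖q‖ ^ n.choose 2 / (1 - ‖q‖) ^ n := by
        gcongr
        · exact pow_le_one₀ (norm_nonneg t) ht
        · simpa using pow_le_norm_qPoch (a := -q) (by rwa [norm_neg]) hq.le n
    _ = (1 - ‖q‖)⁻¹ ^ n * ‖q‖ ^ n.choose 2 := by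
        rw [inv_pow, one_mul, div_eq_inv_mul]

lemma norm_rhsCoeff_le (hq : ‖q‖ < 1) (ht : ‖t‖ ≤ 1) (n : ℕ) :
    ‖rhsCoeff q t n‖
      ≤ Real.exp (1 / (1 - ‖q‖)) * ((1 - ‖q‖)⁻¹ ^ n * ‖q‖ ^ n.choose 2) := by
  have hpos : 0 < 1 - ‖q‖ := by linarith
  calc ‖rhsCoeff q t n‖
      = ‖t‖ ^ n * ‖q‖ ^ (3 * n.choose 2 + n) * ‖qPoch (-t) q n‖
          / ‖qPoch (-q) q n‖ := by
        simp [rhsCoeff, norm_pow]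
    _ ≤ 1 * ‖q‖ ^ n.choose 2 * Real.exp (1 / (1 - ‖q‖)) / (1 - ‖q‖) ^ n := by
        gcongr ?_ * ?_ * ?_ / ?_
        · exact pow_le_one₀ (norm_nonneg t) ht
        · exact pow_le_pow_of_le_one (norm_nonneg q) hq.le (by omega)
        · refine (norm_qPoch_le_exp hq n).trans ?_
          gcongr
          rwa [norm_neg]
        · simpa using pow_le_norm_qPoch (a := -q) (by rwa [norm_neg]) hq.le n
    _ = Real.exp (1 / (1 - ‖q‖)) * ((1 - ‖q‖)⁻¹ ^ n * ‖q‖ ^ n.choose 2) := by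
        rw [inv_pow, one_mul, div_eq_inv_mul]
        ring

lemma norm_rhsTerm_le (hq : ‖q‖ < 1) (ht : ‖t‖ ≤ 1) (n : ℕ) :
    ‖rhsTerm q t n‖
      ≤ 2 * (Real.exp (1 / (1 - ‖q‖)) * ((1 - ‖q‖)⁻¹ ^ n * ‖q‖ ^ n.choose 2)) := by
  have h2 : ‖1 - t * q ^ (2 * n)‖ ≤ 2 := by
    have hle := norm_mul_le_one ht (norm_pow q (2 * n) ▸ pow_le_one₀ (norm_nonneg q) hq.le)
    linarith [norm_sub_le 1 (t * q ^ (2 * n)), norm_one (α := ℂ)]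
  rw [rhsTerm, norm_mul, mul_comm]
  exact mul_le_mul h2 (norm_rhsCoeff_le hq ht n) (norm_nonneg _) zero_le_two

lemma summable_majorant (hq : ‖q‖ < 1) :
    Summable fun n => (1 - ‖q‖)⁻¹ ^ n * ‖q‖ ^ n.choose 2 :=
  summable_pow_mul_pow_choose_two (by rwa [abs_norm])

lemma summable_lhsTerm (hq : ‖q‖ < 1) (ht : ‖t‖ ≤ 1) : Summable (lhsTerm q t) :=
  .of_norm_bounded (summable_majorant hq) (norm_lhsTerm_le hq ht)

lemma summable_rhsCoeff (hq : ‖q‖ < 1) (ht : ‖t‖ ≤ 1) : Summable (rhsCoeff q t) :=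
  .of_norm_bounded ((summable_majorant hq).mul_left _) (norm_rhsCoeff_le hq ht)

lemma summable_rhsTerm (hq : ‖q‖ < 1) (ht : ‖t‖ ≤ 1) : Summable (rhsTerm q t) :=
  .of_norm_bounded (((summable_majorant hq).mul_left _).mul_left 2) (norm_rhsTerm_le hq ht)

lemma lhsSeries_add_one_add_mul_lhsSeries_mul (hq : ‖q‖ < 1) (ht : ‖t‖ ≤ 1) :
    lhsSeries q t + (1 + t) * lhsSeries q (t * q) = 2 := by
  have hx : Tendsto (fun n => lhsTerm q t n * (1 + q ^ n)) atTop (𝓝 0) := by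
    simpa using (summable_lhsTerm hq ht).tendsto_atTop_zero.mul
      ((tendsto_pow_atTop_nhds_zero_of_norm_lt_one hq).const_add 1)
  rw [lhsSeries, lhsSeries, ← tsum_mul_left]
  refine (tsum_add_tsum_eq_of_telescoping (summable_lhsTerm hq ht)
    ((summable_lhsTerm hq (norm_mul_le_one ht hq.le)).mul_left _) hx fun n => ?_).trans ?_
  · rw [lhsTerm_mul_right, lhsTerm_succ_mul hq]
    ring
  · simp [lhsTerm, qPoch_zero]
    norm_num

lemma rhsSeries_add_one_add_mul_rhsSeries_mul (hq : ‖q‖ < 1) (ht : ‖t‖ ≤ 1) :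
    rhsSeries q t + (1 + t) * rhsSeries q (t * q) = 2 := by
  have hx : Tendsto (fun n => rhsCoeff q t n * (1 + q ^ n)) atTop (𝓝 0) := by
    simpa using (summable_rhsCoeff hq ht).tendsto_atTop_zero.mul
      ((tendsto_pow_atTop_nhds_zero_of_norm_lt_one hq).const_add 1)
  rw [rhsSeries, rhsSeries, ← tsum_mul_left]
  refine (tsum_add_tsum_eq_of_telescoping (summable_rhsTerm hq ht)
    ((summable_rhsTerm hq (norm_mul_le_one ht hq.le)).mul_left _) hx fun n => ?_).trans ?_
  · rw [rhsTerm, rhsTerm, ← mul_assoc, one_add_mul_rhsCoeff_mul_right, rhsCoeff_succ_mul hq]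
    ring
  · simp [rhsCoeff, qPoch_zero]
    norm_num

lemma lhsSeries_zero (q : ℂ) : lhsSeries q 0 = 1 := by
  rw [lhsSeries, tsum_eq_single 0 fun n hn => by simp [lhsTerm, hn]]
  simp [lhsTerm, qPoch_zero]

lemma rhsSeries_zero (q : ℂ) : rhsSeries q 0 = 1 := by
  rw [rhsSeries, tsum_eq_single 0 fun n hn => by simp [rhsTerm, rhsCoeff, hn]]
  simp [rhsTerm, rhsCoeff, qPoch_zero]

lemma continuousOn_lhsSeries (hq : ‖q‖ < 1) : ContinuousOn (lhsSeries q) (closedBall 0 1) :=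
  continuousOn_tsum (fun n => by unfold lhsTerm; fun_prop) (summable_majorant hq)
    fun n _ ht => norm_lhsTerm_le hq (mem_closedBall_zero_iff.mp ht) n

lemma continuousOn_rhsSeries (hq : ‖q‖ < 1) : ContinuousOn (rhsSeries q) (closedBall 0 1) :=
  continuousOn_tsum (fun n => by unfold rhsTerm rhsCoeff; fun_prop)
    (((summable_majorant hq).mul_left _).mul_left 2)
    fun n _ ht => norm_rhsTerm_le hq (mem_closedBall_zero_iff.mp ht) n

theorem lhsSeries_eq_rhsSeries (hq : ‖q‖ < 1) (ht : ‖t‖ ≤ 1) :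
    lhsSeries q t = rhsSeries q t := by
  have hcont : ContinuousWithinAt (fun t => lhsSeries q t - rhsSeries q t) (closedBall 0 1) 0 :=
    ((continuousOn_lhsSeries hq).sub (continuousOn_rhsSeries hq)).continuousWithinAt
      (mem_closedBall_self zero_le_one)
  have hfun : ∀ t ∈ closedBall (0 : ℂ) 1, (lhsSeries q t - rhsSeries q t)
      + (1 + t) * (lhsSeries q (t * q) - rhsSeries q (t * q)) = 0 := fun t ht => by
    rw [mem_closedBall_zero_iff] at ht
    linear_combination lhsSeries_add_one_add_mul_lhsSeries_mul hq ht
      - rhsSeries_add_one_add_mul_rhsSeries_mul hq ht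
  exact sub_eq_zero.mp <| eqOn_zero_of_add_one_add_mul_comp_mul_eq_zero hq hcont
    (by simp [lhsSeries_zero, rhsSeries_zero]) hfun (mem_closedBall_zero_iff.mpr ht)

lemma lhsSeries_self (hq : ‖q‖ < 1) :
    lhsSeries q q = ∑' n : ℕ, q ^ (n * (2 * n + 1)) / qPoch (-q) q (2 * n + 1) := by
  have hs := summable_lhsTerm hq hq.le
  have heven : Summable fun k => lhsTerm q q (2 * k) :=
    hs.comp_injective (mul_right_injective₀ two_ne_zero)
  have hodd : Summable fun k => lhsTerm q q (2 * k + 1) :=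
    hs.comp_injective fun _ _ h => by omega
  rw [lhsSeries, ← tsum_even_add_odd heven hodd, ← Summable.tsum_add heven hodd]
  refine tsum_congr fun k => ?_
  have hP := qPoch_neg_self_ne_zero hq (2 * k)
  have h1 := one_add_pow_succ_ne_zero hq (2 * k)
  have hsucc := eq_div_of_mul_eq h1 (lhsTerm_succ_mul (t := q) hq (2 * k))
  have hk : lhsTerm q q (2 * k) = q ^ (k * (2 * k + 1)) / qPoch (-q) q (2 * k) := by
    rw [lhsTerm, (even_two_mul k).neg_pow, ← pow_add, add_comm, Nat.choose_two_two_mul_add]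
  rw [hsucc, hk, qPoch_neg_self_succ]
  field_simp
  ring

lemma rhsSeries_self (hq : ‖q‖ < 1) :
    rhsSeries q q = ∑' j : ℕ, q ^ (j * (3 * j + 1) / 2) * (1 - q ^ (2 * j + 1)) := by
  refine tsum_congr fun j => ?_
  have hP := qPoch_neg_self_ne_zero hq j
  rw [rhsTerm, rhsCoeff, ← Nat.three_mul_choose_two_add]
  field_simp
  ring

end Series

theorem stmt_10 (q : ℂ) (hq : ‖q‖ < 1) :
    ∑' n : ℕ, q ^ (n * (2 * n + 1)) / qPoch (-q) q (2 * n + 1)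
      = ∑' j : ℕ, q ^ (j * (3 * j + 1) / 2) * (1 - q ^ (2 * j + 1)) := by
  rw [← lhsSeries_self hq, ← rhsSeries_self hq, lhsSeries_eq_rhsSeries hq hq.le]
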